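/- Irreflexivity of positively iterated static type assignment: for all h, L, T, n, the judgment that T is its own (n+1)-iterated static type in L is contradictory. -/

import Mathlib

inductive Bk | abbr | abst
deriving DecidableEq

inductive Fk | appl | cast
deriving DecidableEq

inductive Tm
| sort : Nat → Tm
| lref : Nat → Tm
| bind : Bk → Tm → Tm → Tm
| flat : Fk → Tm → Tm → Tm
deriving DecidableEq

inductive Lift : Nat → Nat → Tm → Tm → Prop
| sort (l m k) : Lift l m (.sort k) (.sort k)
| lt {l m i} : i < l → Lift l m (.lref i) (.lref i)
| ge {l m i} : l ≤ i → Lift l m (.lref i) (.lref (i + m))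
| bind {l m b W₁ W₂ T₁ T₂} : Lift l m W₁ W₂ → Lift (l + 1) m T₁ T₂ →
    Lift l m (.bind b W₁ T₁) (.bind b W₂ T₂)
| flat {l m f V₁ V₂ T₁ T₂} : Lift l m V₁ V₂ → Lift l m T₁ T₂ →
    Lift l m (.flat f V₁ T₁) (.flat f V₂ T₂)

inductive Env
| null : Env
| pair : Env → Bk → Tm → Env
deriving DecidableEq

inductive Drop : Nat → Nat → Env → Env → Prop
| atom (l) : Drop l 0 .null .null
| pair {L₁ L₂ b W} : Drop 0 0 L₁ L₂ → Drop 0 0 (.pair L₁ b W) (.pair L₂ b W)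
| drop {m L₁ L₂ b W} : Drop 0 m L₁ L₂ → Drop 0 (m + 1) (.pair L₁ b W) L₂
| skip {l m L₁ L₂ b W₁ W₂} : Drop l m L₁ L₂ → Lift l m W₂ W₁ →
    Drop (l + 1) m (.pair L₁ b W₁) (.pair L₂ b W₂)

inductive Lstas (h : Nat → Nat) : Env → Tm → Tm → Nat → Prop
| sort {L k n} : Lstas h L (.sort k) (.sort (h^[n] k)) n
| zero {L K W V i} : Drop 0 i L (.pair K .abst W) → Lstas h K W V 0 →
    Lstas h L (.lref i) (.lref i) 0
| succ {L K W₁ V₁ V₂ i n} : Drop 0 i L (.pair K .abst W₁) →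
    Lstas h K W₁ V₁ n → Lift 0 (i + 1) V₁ V₂ → Lstas h L (.lref i) V₂ (n + 1)
| ldef {L K V W₁ W₂ i n} : Drop 0 i L (.pair K .abbr V) →
    Lstas h K V W₁ n → Lift 0 (i + 1) W₁ W₂ → Lstas h L (.lref i) W₂ n
| bind {L b W T U n} : Lstas h (.pair L b W) T U n →
    Lstas h L (.bind b W T) (.bind b W U) n
| appl {L V T U n} : Lstas h L T U n → Lstas h L (.flat .appl V T) (.flat .appl V U) n
| cast {L W T U n} : Lstas h L T U n → Lstas h L (.flat .cast W T) U n

/-!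
A positively iterated type is never the term itself. A sort `k` is typed by `h^[n] k > k`; a
variable `#i` is typed by a type relocated by `i + 1` past it, so every variable left free in
that type exceeds `i`; binders and applications keep their head and reduce to their bodies.
A cast `ⓝW.T` is typed by the type of `T`, so the induction has to exclude more than `U = T`:
`U` must not be `T` under any chain of casts.
-/

inductive CastChain : Tm → Tm → Prop
| refl (T) : CastChain T T
| cast {W U T} : CastChain U T → CastChain (.flat .cast W U) T

theorem CastChain.eq_of_sort {k : Nat} {T : Tm} (hT : CastChain (.sort k) T) : T = .sort k := by
  cases hT; rfl

theorem CastChain.trans {U V T : Tm} (hUV : CastChain U V) (hVT : CastChain V T) :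
    CastChain U T := by
  induction hUV with
  | refl => exact hVT
  | cast _ ih => exact .cast (ih hVT)

theorem Function.lt_iterate_succ_of_forall_lt {α : Type*} [Preorder α] {f : α → α}
    (hf : ∀ x, x < f x) (n : ℕ) (x : α) : x < f^[n + 1] x :=
  (hf x).trans_le (Function.id_le_iterate_of_id_le (fun y => (hf y).le) n (f x))

theorem Lift.not_lref {l m i : Nat} {V : Tm} (hl : l ≤ i) (hi : i < l + m) :
    ¬ Lift l m V (.lref i) := by
  rintro (_ | _ | _) <;> omega

theorem CastChain.not_lift {l m : Nat} {U T : Tm} (hUT : CastChain U T)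
    (hT : ∀ V, ¬ Lift l m V T) (V : Tm) : ¬ Lift l m V U := by
  induction hUT generalizing V with
  | refl => exact hT V
  | cast _ ih => rintro (_ | _ | _ | _ | ⟨_, hU⟩); exact ih hT _ hU

theorem Lstas.not_castChain_of_pos {h : Nat → Nat} (hh : ∀ k, k < h k) {L : Env} {T U : Tm}
    {n : Nat} (hTU : Lstas h L T U n) (hn : 0 < n) : ¬ CastChain U T := by
  induction hTU with
  | @sort _ k n =>
    obtain ⟨n, rfl⟩ := Nat.exists_eq_add_one_of_ne_zero hn.ne'
    exact fun hU => (Function.lt_iterate_succ_of_forall_lt hh n k).ne (Tm.sort.inj hU.eq_of_sort)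
  | zero => omega
  | succ _ _ hV =>
    exact fun hU => hU.not_lift (fun _ => Lift.not_lref (Nat.zero_le _) (by omega)) _ hV
  | ldef _ _ hW =>
    exact fun hU => hU.not_lift (fun _ => Lift.not_lref (Nat.zero_le _) (by omega)) _ hW
  | bind _ ih => rintro ⟨⟩; exact ih hn (.refl _)
  | appl _ ih => rintro ⟨⟩; exact ih hn (.refl _)
  | cast _ ih => exact fun hU => ih hn (hU.trans (.cast (.refl _)))

theorem lstas_inv_refl_pos {h : Nat → Nat} (hh : ∀ k, k < h k)
    (L : Env) (T : Tm) (n : Nat) : ¬ Lstas h L T T (n + 1) :=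
  fun hTT => hTT.not_castChain_of_pos hh n.succ_pos (.refl T)
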